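/- Let M be a MAGNN with L layers, let A_1,…,A_k be unary predicates and P_1,…,P_j binary predicates (j, k ≥ 0), let a be a constant, and let b_1,…,b_j be constants not necessarily distinct from each other or from a. Let D_2 = { A_1(a),…,A_k(a), P_1(a,b_1),…,P_j(a,b_j) }, and let D_1 be obtained from D_2 by replacing each b_i that equals a with some constant b_i' ≠ a (different indices may use different replacement constants). Then for every ℓ ∈ {0,…,L} and every component index p, v^a_ℓ(D_1)[p] ≤ v^a_ℓ(D_2)[p], where v^a_ℓ(D) denotes the layer-ℓ vector that M assigns to a on input D. -/

import Mathlib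

open scoped BigOperators

namespace KG

/-- A fact over a signature with `δ` unary predicates (indexed by `Fin δ`) and
binary predicates indexed by `Col`; constants are natural numbers. -/
inductive Fact (δ : ℕ) (Col : Type) where
  | unary : Fin δ → ℕ → Fact δ Col
  | binary : Col → ℕ → ℕ → Fact δ Col
deriving DecidableEq

/-- A dataset is a finite set of facts. -/
abbrev Dataset (δ : ℕ) (Col : Type) [DecidableEq Col] := Finset (Fact δ Col)

variable {δ : ℕ} {Col : Type} [DecidableEq Col] [Fintype Col]

/-- The (finite) set of constants occurring in a dataset. -/
def conD (D : Dataset δ Col) : Finset ℕ :=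
  D.biUnion fun f =>
    match f with
    | .unary _ a => {a}
    | .binary _ a b => {a, b}

/-- The `P`-successors of `a` in `D`. -/
def nbrs (D : Dataset δ Col) (P : Col) (a : ℕ) : Finset ℕ :=
  (conD D).filter fun d => Fact.binary P a d ∈ D

/-- A mean-aggregation GNN with `L ≥ 1` layers, over the signature with `δ` unary
predicates and binary predicates `Col`.  `dims ℓ` is the dimension of the layer-`ℓ`
vectors, with `dims 0 = dims L = δ`; `A ℓ` and `B P ℓ` are the matrices and `bias ℓ`
the bias vector used to compute the layer-`(ℓ+1)` vectors; `act ℓ` is the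
(monotonically increasing, continuous, non-negatively valued) activation function
applied there, and `t` is the classification threshold. -/
structure GNN (δ : ℕ) (Col : Type) where
  L : ℕ
  hL : 1 ≤ L
  dims : ℕ → ℕ
  dims0 : dims 0 = δ
  dimsL : dims L = δ
  A : (ℓ : ℕ) → Matrix (Fin (dims (ℓ + 1))) (Fin (dims ℓ)) ℝ
  B : Col → (ℓ : ℕ) → Matrix (Fin (dims (ℓ + 1))) (Fin (dims ℓ)) ℝ
  bias : (ℓ : ℕ) → Fin (dims (ℓ + 1)) → ℝ
  act : ℕ → ℝ → ℝ
  act_mono : ∀ ℓ, Monotone (act ℓ)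
  act_cont : ∀ ℓ, Continuous (act ℓ)
  act_nonneg : ∀ ℓ x, 0 ≤ act ℓ x
  t : ℝ

/-- The layer-`ℓ` vector that the GNN `M` assigns to the constant `a` on input
dataset `D`.  The mean of an empty family is the zero vector (`0 / 0 = 0` in `ℝ`). -/
noncomputable def GNN.val (M : GNN δ Col) (D : Dataset δ Col) :
    (ℓ : ℕ) → ℕ → Fin (M.dims ℓ) → ℝ
  | 0, a, i => if Fact.unary (Fin.cast M.dims0 i) a ∈ D then (1 : ℝ) else 0
  | ℓ + 1, a, i =>
      M.act ℓ (M.bias ℓ i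
        + (M.A ℓ).mulVec (fun j => M.val D ℓ a j) i
        + ∑ P : Col, (M.B P ℓ).mulVec
            (fun j => (∑ d ∈ nbrs D P a, M.val D ℓ d j) / ((nbrs D P a).card : ℝ)) i)

/-- The dataset transformation induced by the GNN `M`:
`T_M(D) = { Uᵢ(a) : a ∈ con(D), v^a_L[i] ≥ t }`. -/
def GNN.T (M : GNN δ Col) (D : Dataset δ Col) : Set (Fact δ Col) :=
  { f | ∃ (A : Fin δ) (a : ℕ), f = Fact.unary A a ∧ a ∈ conD D ∧
      M.t ≤ M.val D M.L a (Fin.cast M.dimsL.symm A) }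

/-- A GNN is monotonic (is a MAGNN) if all matrix entries are non-negative. -/
def GNN.Monotonic (M : GNN δ Col) : Prop :=
  (∀ ℓ i j, 0 ≤ M.A ℓ i j) ∧ (∀ P ℓ i j, 0 ≤ M.B P ℓ i j)

/-- Concepts in the syntax `C ::= ⊤ | A | C ⊓ C' | C ⊔ C' | ≥ₙ P.C`
(`∃P.C` is `≥₁ P.C`); ELUQ concepts are those in which every `≥ₙ` has `n ≥ 1`. -/
inductive Concept (δ : ℕ) (Col : Type) where
  | top : Concept δ Col
  | atom : Fin δ → Concept δ Col
  | and : Concept δ Col → Concept δ Col → Concept δ Col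
  | or : Concept δ Col → Concept δ Col → Concept δ Col
  | atLeast : ℕ → Col → Concept δ Col → Concept δ Col
deriving DecidableEq

/-- A concept is a (well-formed) ELUQ concept when every `≥ₙ` has `n` a positive integer. -/
inductive ELUQ : Concept δ Col → Prop
  | top : ELUQ .top
  | atom (A : Fin δ) : ELUQ (.atom A)
  | and {C₁ C₂} : ELUQ C₁ → ELUQ C₂ → ELUQ (.and C₁ C₂)
  | or {C₁ C₂} : ELUQ C₁ → ELUQ C₂ → ELUQ (.or C₁ C₂)
  | atLeast {C} (n : ℕ) (P : Col) (hn : 1 ≤ n) : ELUQ C → ELUQ (.atLeast n P C)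

/-- Satisfaction of a concept by a constant over a dataset. -/
def sat (D : Dataset δ Col) : ℕ → Concept δ Col → Prop
  | _, .top => True
  | c, .atom A => Fact.unary A c ∈ D
  | c, .and C₁ C₂ => sat D c C₁ ∧ sat D c C₂
  | c, .or C₁ C₂ => sat D c C₁ ∨ sat D c C₂
  | c, .atLeast n P C =>
      ∃ S : Finset ℕ, S.card = n ∧ ∀ d ∈ S, Fact.binary P c d ∈ D ∧ sat D d C

/-- A rule `C ⊑ A`. -/
structure Rule (δ : ℕ) (Col : Type) where
  body : Concept δ Col
  head : Fin δ
deriving DecidableEq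

/-- Immediate consequences of a rule on a dataset. -/
def Rule.T (r : Rule δ Col) (D : Dataset δ Col) : Set (Fact δ Col) :=
  { f | ∃ a : ℕ, f = Fact.unary r.head a ∧ a ∈ conD D ∧ sat D a r.body }

/-- A rule is sound for a GNN if its consequences are always among the GNN's. -/
def Sound (r : Rule δ Col) (M : GNN δ Col) : Prop :=
  ∀ D : Dataset δ Col, r.T D ⊆ M.T D


/-- The dataset `{ A₁(a),…,A_k(a) } ∪ { P(a,b) : (P,b) ∈ ps }`. -/
def mkD (As : List (Fin δ)) (a : ℕ) (ps : List (Col × ℕ)) : Dataset δ Col :=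
  (As.map fun A => Fact.unary A a).toFinset ∪
    (ps.map fun q => Fact.binary q.1 a q.2).toFinset

private lemma mem_conD_binary {D : Dataset δ Col} {P : Col} {c b : ℕ}
    (h : Fact.binary P c b ∈ D) : b ∈ conD D :=
  Finset.mem_biUnion.mpr ⟨_, h, by simp⟩

private lemma mem_nbrs_iff {D : Dataset δ Col} {P : Col} {c b : ℕ} :
    b ∈ nbrs D P c ↔ Fact.binary P c b ∈ D := by
  constructor
  · intro h; exact (Finset.mem_filter.mp h).2
  · intro h; exact Finset.mem_filter.mpr ⟨mem_conD_binary h, h⟩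

private lemma unary_mem_mkD {As : List (Fin δ)} {a : ℕ} {ps : List (Col × ℕ)}
    {A : Fin δ} {c : ℕ} :
    Fact.unary A c ∈ mkD As a ps ↔ A ∈ As ∧ c = a := by
  simp only [mkD, Finset.mem_union, List.mem_toFinset, List.mem_map]
  constructor
  · rintro (⟨A', hA', hEq⟩ | ⟨q, _, hEq⟩)
    · injection hEq with h1 h2
      exact ⟨h1 ▸ hA', h2.symm⟩
    · cases hEq
  · rintro ⟨hA, rfl⟩
    exact Or.inl ⟨A, hA, rfl⟩

private lemma binary_mem_mkD {As : List (Fin δ)} {a : ℕ} {ps : List (Col × ℕ)}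
    {P : Col} {c b : ℕ} :
    Fact.binary P c b ∈ mkD As a ps ↔ c = a ∧ (P, b) ∈ ps := by
  constructor
  · intro h
    rcases Finset.mem_union.mp h with h | h
    · obtain ⟨A, _, hA⟩ := List.mem_map.mp (List.mem_toFinset.mp h)
      cases hA
    · obtain ⟨q, hq, hEq⟩ := List.mem_map.mp (List.mem_toFinset.mp h)
      injection hEq with h1 h2 h3
      exact ⟨h2.symm, by rw [← h1, ← h3]; exact hq⟩
  · rintro ⟨rfl, hq⟩
    exact Finset.mem_union_right _ (List.mem_toFinset.mpr
      (List.mem_map.mpr ⟨(P, b), hq, rfl⟩))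

private lemma nbrs_mkD_ne {As : List (Fin δ)} {a : ℕ} {ps : List (Col × ℕ)}
    {P : Col} {d : ℕ} (h : d ≠ a) : nbrs (mkD As a ps) P d = ∅ := by
  ext b
  simp only [Finset.notMem_empty, iff_false, mem_nbrs_iff, binary_mem_mkD]
  exact fun hc => h hc.1

private lemma nbrs_empty {P : Col} {d : ℕ} : nbrs (∅ : Dataset δ Col) P d = ∅ := by
  ext b; simp [mem_nbrs_iff]

private lemma mulVec_mono {m n : ℕ} {B : Matrix (Fin m) (Fin n) ℝ}
    (hB : ∀ i j, 0 ≤ B i j) {u v : Fin n → ℝ} (huv : ∀ j, u j ≤ v j) (i : Fin m) :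
    B.mulVec u i ≤ B.mulVec v i := by
  simp only [Matrix.mulVec, dotProduct]
  exact Finset.sum_le_sum fun j _ => mul_le_mul_of_nonneg_left (huv j) (hB i j)

private lemma mulVec_nonneg {m n : ℕ} {B : Matrix (Fin m) (Fin n) ℝ}
    (hB : ∀ i j, 0 ≤ B i j) {v : Fin n → ℝ} (hv : ∀ j, 0 ≤ v j) (i : Fin m) :
    0 ≤ B.mulVec v i := by
  simp only [Matrix.mulVec, dotProduct]
  exact Finset.sum_nonneg fun j _ => mul_nonneg (hB i j) (hv j)

private lemma mulVec_zero_fun {m n : ℕ} (B : Matrix (Fin m) (Fin n) ℝ) (i : Fin m) :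
    B.mulVec (fun _ => (0 : ℝ)) i = 0 := by
  simp [Matrix.mulVec, dotProduct]

private lemma val_nonneg (M : GNN δ Col) (D : Dataset δ Col) :
    ∀ ℓ d (i : Fin (M.dims ℓ)), 0 ≤ M.val D ℓ d i
  | 0, d, i => by
    simp only [GNN.val]
    split <;> norm_num
  | ℓ + 1, d, i => by
    simp only [GNN.val]
    exact M.act_nonneg ℓ _

private lemma val_ne (M : GNN δ Col) (As : List (Fin δ)) (a : ℕ) (ps : List (Col × ℕ)) :
    ∀ ℓ d, d ≠ a → ∀ i, M.val (mkD As a ps) ℓ d i = M.val (∅ : Dataset δ Col) ℓ 0 i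
  | 0, d, hd, i => by
    simp only [GNN.val, Finset.notMem_empty, if_false]
    rw [if_neg]
    intro h
    exact hd (unary_mem_mkD.mp h).2
  | ℓ + 1, d, hd, i => by
    have hIH : (fun j => M.val (mkD As a ps) ℓ d j)
        = fun j => M.val (∅ : Dataset δ Col) ℓ 0 j :=
      funext fun j => val_ne M As a ps ℓ d hd j
    simp only [GNN.val, nbrs_mkD_ne hd, nbrs_empty, Finset.sum_empty,
      Finset.card_empty, Nat.cast_zero, zero_div, hIH]

/-- Let `M` be a MAGNN with `L` layers,
`D₂ = { A₁(a),…,A_k(a), P₁(a,b₁),…,Pⱼ(a,bⱼ) }` (given by the list `ps₂` of pairs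
`(Pᵢ, bᵢ)`), and let `D₁` (given by `ps₁`) be obtained from `D₂` by replacing each
`bᵢ` that equals `a` by some constant `bᵢ' ≠ a` (different indices may use different
replacement constants) while keeping all other `bᵢ` unchanged.  Then for every
`ℓ ∈ {0,…,L}` and component `p`, `v^a_ℓ(D₁)[p] ≤ v^a_ℓ(D₂)[p]`. -/
theorem unmerge_le (M : GNN δ Col) (hM : M.Monotonic)
    (As : List (Fin δ)) (a : ℕ) (ps₁ ps₂ : List (Col × ℕ))
    (hlen : ps₁.length = ps₂.length)
    (hfst : ∀ i : Fin ps₂.length, (ps₁.get (Fin.cast hlen.symm i)).1 = (ps₂.get i).1)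
    (hkeep : ∀ i : Fin ps₂.length,
      (ps₂.get i).2 ≠ a → (ps₁.get (Fin.cast hlen.symm i)).2 = (ps₂.get i).2)
    (hrepl : ∀ i : Fin ps₂.length,
      (ps₂.get i).2 = a → (ps₁.get (Fin.cast hlen.symm i)).2 ≠ a)
    (ℓ : ℕ) (hℓ : ℓ ≤ M.L) (p : Fin (M.dims ℓ)) :
    M.val (mkD As a ps₁) ℓ a p ≤ M.val (mkD As a ps₂) ℓ a p := by
  clear hℓ
  -- all second components of ps₁ are ≠ a
  have hps1 : ∀ (P : Col) (b : ℕ), (P, b) ∈ ps₁ → b ≠ a := by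
    intro P b hb
    obtain ⟨i, hi⟩ := List.mem_iff_get.mp hb
    have hcast : Fin.cast hlen.symm (Fin.cast hlen i) = i := rfl
    by_cases h : (ps₂.get (Fin.cast hlen i)).2 = a
    · have := hrepl (Fin.cast hlen i) h
      rw [hcast, hi] at this
      exact this
    · have := hkeep (Fin.cast hlen i) h
      rw [hcast, hi] at this
      rw [show b = (P, b).2 from rfl, this]
      exact h
  -- nonemptiness transfers
  have hne : ∀ P : Col, (nbrs (mkD As a ps₁) P a).Nonempty →
      (nbrs (mkD As a ps₂) P a).Nonempty := by
    rintro P ⟨b, hb⟩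
    have hb' : (P, b) ∈ ps₁ := (binary_mem_mkD.mp (mem_nbrs_iff.mp hb)).2
    obtain ⟨i, hi⟩ := List.mem_iff_get.mp hb'
    have h1 : (ps₂.get (Fin.cast hlen i)).1 = P := by
      have := hfst (Fin.cast hlen i)
      rw [show Fin.cast hlen.symm (Fin.cast hlen i) = i from rfl, hi] at this
      exact this.symm
    refine ⟨(ps₂.get (Fin.cast hlen i)).2,
      mem_nbrs_iff.mpr (binary_mem_mkD.mpr ⟨rfl, ?_⟩)⟩
    rw [← h1]
    exact List.get_mem ps₂ (Fin.cast hlen i)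
  have key : ∀ ℓ,
      (∀ p : Fin (M.dims ℓ), M.val (mkD As a ps₁) ℓ a p ≤ M.val (mkD As a ps₂) ℓ a p) ∧
      (∀ p : Fin (M.dims ℓ), M.val (∅ : Dataset δ Col) ℓ 0 p ≤ M.val (mkD As a ps₂) ℓ a p) := by
    intro ℓ
    induction ℓ with
    | zero =>
      constructor
      · intro p
        simp [GNN.val, unary_mem_mkD]
      · intro p
        simp only [GNN.val, Finset.notMem_empty, if_false]
        split <;> norm_num
    | succ ℓ IH =>
      have hmean : ∀ (P : Col) (j : Fin (M.dims ℓ)),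
          (∑ d ∈ nbrs (mkD As a ps₁) P a, M.val (mkD As a ps₁) ℓ d j)
              / ((nbrs (mkD As a ps₁) P a).card : ℝ)
          ≤ (∑ d ∈ nbrs (mkD As a ps₂) P a, M.val (mkD As a ps₂) ℓ d j)
              / ((nbrs (mkD As a ps₂) P a).card : ℝ) := by
        intro P j
        rcases (nbrs (mkD As a ps₁) P a).eq_empty_or_nonempty with h1 | h1
        · rw [h1]
          simp only [Finset.sum_empty, Finset.card_empty, Nat.cast_zero, zero_div]
          exact div_nonneg (Finset.sum_nonneg fun d _ => val_nonneg M _ ℓ d j)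
            (Nat.cast_nonneg _)
        · have h2 := hne P h1
          have hall : ∀ d ∈ nbrs (mkD As a ps₁) P a,
              M.val (mkD As a ps₁) ℓ d j = M.val (∅ : Dataset δ Col) ℓ 0 j := by
            intro d hd
            have hmem : (P, d) ∈ ps₁ := (binary_mem_mkD.mp (mem_nbrs_iff.mp hd)).2
            exact val_ne M As a ps₁ ℓ d (hps1 P d hmem) j
          rw [Finset.sum_congr rfl hall, Finset.sum_const, nsmul_eq_mul]
          have hc1 : ((nbrs (mkD As a ps₁) P a).card : ℝ) ≠ 0 := by
            exact_mod_cast Finset.card_ne_zero.mpr h1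
          rw [mul_div_cancel_left₀ _ hc1]
          have hc2 : 0 < ((nbrs (mkD As a ps₂) P a).card : ℝ) := by
            exact_mod_cast Finset.card_pos.mpr h2
          rw [le_div_iff₀ hc2]
          have hlb : ∀ d ∈ nbrs (mkD As a ps₂) P a,
              M.val (∅ : Dataset δ Col) ℓ 0 j ≤ M.val (mkD As a ps₂) ℓ d j := by
            intro d hd
            by_cases hda : d = a
            · subst hda; exact IH.2 j
            · rw [val_ne M As a ps₂ ℓ d hda j]
          have hs := Finset.card_nsmul_le_sum (nbrs (mkD As a ps₂) P a)
            (fun d => M.val (mkD As a ps₂) ℓ d j) (M.val (∅ : Dataset δ Col) ℓ 0 j) hlb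
          rw [nsmul_eq_mul] at hs
          rw [mul_comm]
          exact hs
      constructor
      · intro p
        simp only [GNN.val]
        apply M.act_mono ℓ
        refine add_le_add (add_le_add le_rfl
          (mulVec_mono (fun i j => hM.1 ℓ i j) IH.1 p)) ?_
        exact Finset.sum_le_sum fun P _ =>
          mulVec_mono (fun i j => hM.2 P ℓ i j) (fun j => hmean P j) p
      · intro p
        simp only [GNN.val, nbrs_empty, Finset.sum_empty, Finset.card_empty,
          Nat.cast_zero, zero_div]
        apply M.act_mono ℓ
        refine add_le_add (add_le_add le_rfl
          (mulVec_mono (fun i j => hM.1 ℓ i j) IH.2 p)) ?_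
        refine Finset.sum_le_sum fun P _ => ?_
        rw [mulVec_zero_fun]
        exact mulVec_nonneg (fun i j => hM.2 P ℓ i j)
          (fun j => div_nonneg (Finset.sum_nonneg fun d _ => val_nonneg M _ ℓ d j)
            (Nat.cast_nonneg _)) p
  exact (key ℓ).1 p

end KG
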